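/- Let A be a P-interior 𝒪-algebra and K ≤ Aut(P). The external direct sum ⊕_{φ∈K} A^{Δ_φ(P)}, with multiplication induced by that of A (the product of the φ-component and the ψ-component lying in the (ψ∘φ)-component), is an associative unital 𝒪-algebra, and ⊕_{φ∈K} ( Σ_{Q<P} A^{Δ_φ(P)}_{Δ_φ(Q)} + 𝔭·A^{Δ_φ(P)} ), where Q runs over the proper subgroups of P, is a two-sided ideal of it; consequently the quotient, the extended Brauer quotient N̄_A^K(P), is a K-graded k-algebra and the direct sum of the quotient maps Br_{Δ_φ(P)} is a homomorphism of graded algebras. -/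

import Mathlib

open scoped Classical DirectSum

section Common

variable (𝒪 : Type*) [CommRing 𝒪]
variable {A : Type*} [Ring A] [Algebra 𝒪 A]
variable {P : Type*} [Group P]

/-- `A^{Δ_φ(Q)}`: elements `a` with `u·a = a·φ(u)` for all `u ∈ Q`. -/
def intFixed (σ : P →* Aˣ) (φ : P ≃* P) (Q : Subgroup P) : Submodule 𝒪 A where
  carrier := {a | ∀ u ∈ Q, (σ u : A) * a = a * (σ (φ u) : A)}
  add_mem' := by intro a b ha hb u hu; rw [mul_add, add_mul, ha u hu, hb u hu]
  zero_mem' := by intro u hu; rw [mul_zero, zero_mul]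
  smul_mem' := by intro r a ha u hu
                  rw [mul_smul_comm, smul_mul_assoc, ha u hu]

theorem intFixed_mul_mem {σ : P →* Aˣ} {φ ψ : P ≃* P} {Q : Subgroup P} {a b : A}
    (ha : a ∈ intFixed 𝒪 σ φ Q) (hb : b ∈ intFixed 𝒪 σ ψ ⊤) :
    a * b ∈ intFixed 𝒪 σ (φ.trans ψ) Q := by
  intro u hu
  calc (σ u : A) * (a * b) = ((σ u : A) * a) * b := by rw [mul_assoc]
    _ = a * ((σ (φ u) : A) * b) := by rw [ha u hu, mul_assoc]
    _ = (a * b) * (σ (ψ (φ u)) : A) := by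
          rw [hb (φ u) (Subgroup.mem_top _), mul_assoc]

theorem intFixed_one_mem (σ : P →* Aˣ) : (1 : A) ∈ intFixed 𝒪 σ (1 : MulAut P) ⊤ := by
  intro u _; rw [mul_one, one_mul]; rfl

/-- relative trace `Tr_{Δ_φ(Q)}^{Δ_φ(P)}(c) = Σ_u u⁻¹·c·φ(u)` over representatives of the
right cosets `Qu` of `Q` in `P`. -/
noncomputable def relTr [Finite P] (σ : P →* Aˣ) (φ : P ≃* P) (Q : Subgroup P) (c : A) : A :=
  ∑ᶠ x : Quotient (QuotientGroup.rightRel Q),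
    ((σ x.out)⁻¹ : Aˣ) * c * (σ (φ x.out) : A)

/-- `Σ_{Q < P} A^{Δ_φ(P)}_{Δ_φ(Q)}`. -/
noncomputable def trSum [Finite P] (σ : P →* Aˣ) (φ : P ≃* P) : Submodule 𝒪 A :=
  ⨆ Q : {Q : Subgroup P // Q < ⊤},
    Submodule.span 𝒪 (relTr σ φ Q '' (intFixed 𝒪 σ φ Q))

/-- `Σ_{Q<P} A^{Δ_φ(P)}_{Δ_φ(Q)} + 𝔭·A^{Δ_φ(P)}`. -/
noncomputable def brDen [Finite P] (𝔭 : Ideal 𝒪) (σ : P →* Aˣ) (φ : P ≃* P) : Submodule 𝒪 A :=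
  trSum 𝒪 σ φ ⊔ 𝔭 • intFixed 𝒪 σ φ ⊤

/-- The Brauer quotient `A(Δ_φ(P))`. -/
noncomputable abbrev BrQuot [Finite P] (𝔭 : Ideal 𝒪) (σ : P →* Aˣ) (φ : P ≃* P) :=
  ↥(intFixed 𝒪 σ φ ⊤) ⧸ ((brDen 𝒪 𝔭 σ φ).comap (intFixed 𝒪 σ φ ⊤).subtype)

end Common

set_option linter.unusedSectionVars false

section Aux

variable {𝒪 : Type*} [CommRing 𝒪]
variable {A : Type*} [Ring A] [Algebra 𝒪 A]
variable {P : Type*} [Group P] [Finite P]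
variable {σ : P →* Aˣ}

theorem myRelTr_mul {φ ψ : P ≃* P} {Q : Subgroup P} (c : A) {a : A}
    (ha : a ∈ intFixed 𝒪 σ φ ⊤) :
    relTr σ ψ Q c * a = relTr σ (ψ.trans φ) Q (c * a) := by
  unfold relTr
  rw [finsum_mul' _ _ (Set.toFinite _)]
  refine finsum_congr fun x => ?_
  have h := ha (ψ x.out) (Subgroup.mem_top _)
  show ((σ x.out)⁻¹ : Aˣ) * c * (σ (ψ x.out) : A) * a = _
  rw [mul_assoc ((((σ x.out)⁻¹ : Aˣ)) * c : A), h]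
  show _ = ((σ x.out)⁻¹ : Aˣ) * (c * a) * (σ (φ (ψ x.out)) : A)
  rw [← mul_assoc, ← mul_assoc]

theorem myMul_intFixed_mem {φ ψ : P ≃* P} {Q : Subgroup P} {a c : A}
    (ha : a ∈ intFixed 𝒪 σ φ ⊤) (hc : c ∈ intFixed 𝒪 σ ψ Q) :
    a * c ∈ intFixed 𝒪 σ (φ.trans ψ) (Q.comap φ.toMonoidHom) := by
  intro u hu
  have h1 : (σ u : A) * a = a * σ (φ u) := ha u (Subgroup.mem_top _)
  have h2 : (σ (φ u) : A) * c = c * σ (ψ (φ u)) := hc (φ u) hu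
  calc (σ u : A) * (a * c) = ((σ u : A) * a) * c := (mul_assoc _ _ _).symm
    _ = a * ((σ (φ u) : A) * c) := by rw [h1, mul_assoc]
    _ = (a * c) * (σ (ψ (φ u)) : A) := by rw [h2, ← mul_assoc]

theorem myRelTr_term_eq {χ : P ≃* P} {Q' : Subgroup P} {d : A}
    (hd : d ∈ intFixed 𝒪 σ χ Q') {x y : P}
    (h : (Quotient.mk (QuotientGroup.rightRel Q') x) = Quotient.mk _ y) :
    ((σ y)⁻¹ : Aˣ) * d * (σ (χ y) : A) = ((σ x)⁻¹ : Aˣ) * d * (σ (χ x) : A) := by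
  have hu : y * x⁻¹ ∈ Q' := (QuotientGroup.rightRel_apply).1 (Quotient.exact h)
  obtain ⟨u, hu2, hy⟩ : ∃ u ∈ Q', y = u * x := ⟨y * x⁻¹, hu, by group⟩
  subst hy
  have h3 : ((σ u)⁻¹ : Aˣ) * (d * (σ (χ u) : A)) = d := by
    rw [← hd u hu2, ← mul_assoc, Units.inv_mul, one_mul]
  have e1 : (σ (u * x)) = σ u * σ x := map_mul σ u x
  have e2 : (σ (χ (u * x))) = σ (χ u) * σ (χ x) := by rw [map_mul, map_mul]
  rw [e1, e2, mul_inv_rev]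
  push_cast [Units.val_mul]
  calc ((σ x)⁻¹ : Aˣ) * ((σ u)⁻¹ : Aˣ) * d * ((σ (χ u) : A) * (σ (χ x) : A))
      = ((σ x)⁻¹ : Aˣ) * (((σ u)⁻¹ : Aˣ) * (d * (σ (χ u) : A))) * (σ (χ x) : A) := by
        simp only [mul_assoc]
    _ = ((σ x)⁻¹ : Aˣ) * d * (σ (χ x) : A) := by rw [h3]


theorem myMul_relTr {φ ψ : P ≃* P} {Q : Subgroup P} {a c : A}
    (ha : a ∈ intFixed 𝒪 σ φ ⊤) (hc : c ∈ intFixed 𝒪 σ ψ Q) :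
    a * relTr σ ψ Q c =
      relTr σ (φ.trans ψ) (Q.comap φ.toMonoidHom) (a * c) := by
  have hac : a * c ∈ intFixed 𝒪 σ (φ.trans ψ) (Q.comap φ.toMonoidHom) :=
    myMul_intFixed_mem ha hc
  have hrel : ∀ x y : P, (QuotientGroup.rightRel Q) x y ↔
      (QuotientGroup.rightRel (Q.comap φ.toMonoidHom)) (φ.symm x) (φ.symm y) := by
    intro x y
    rw [QuotientGroup.rightRel_apply, QuotientGroup.rightRel_apply, Subgroup.mem_comap]
    simp
  let e : Quotient (QuotientGroup.rightRel Q) ≃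
      Quotient (QuotientGroup.rightRel (Q.comap φ.toMonoidHom)) :=
    Quotient.congr φ.symm.toEquiv hrel
  unfold relTr
  rw [mul_finsum' _ _ (Set.toFinite _)]
  have key : ∀ q : Quotient (QuotientGroup.rightRel Q),
      a * (((σ q.out)⁻¹ : Aˣ) * c * (σ (ψ q.out) : A)) =
      ((σ ((e q).out))⁻¹ : Aˣ) * (a * c) * (σ ((φ.trans ψ) ((e q).out)) : A) := by
    intro q
    have h1 : (σ (φ.symm q.out) : A) * a = a * (σ q.out : A) := by
      have := ha (φ.symm q.out) (Subgroup.mem_top _)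
      rwa [MulEquiv.apply_symm_apply] at this
    have h1' : a * ((σ q.out)⁻¹ : Aˣ) = (((σ (φ.symm q.out))⁻¹ : Aˣ) : A) * a := by
      have h2 := congrArg
        (fun z : A => (((σ (φ.symm q.out))⁻¹ : Aˣ) : A) * z * (((σ q.out)⁻¹ : Aˣ) : A)) h1
      simpa [mul_assoc, Units.inv_mul_cancel_left, Units.mul_inv_cancel_left,
        Units.mul_inv_cancel_right, Units.inv_mul_cancel_right] using h2
    have step1 : a * (((σ q.out)⁻¹ : Aˣ) * c * (σ (ψ q.out) : A)) =
        ((σ (φ.symm q.out))⁻¹ : Aˣ) * (a * c) * (σ ((φ.trans ψ) (φ.symm q.out)) : A) := by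
      have hψ : (φ.trans ψ) (φ.symm q.out) = ψ q.out := by
        simp [MulEquiv.trans_apply]
      rw [hψ, ← mul_assoc, ← mul_assoc, h1', mul_assoc _ a c]
    have step2 : (Quotient.mk (QuotientGroup.rightRel (Q.comap φ.toMonoidHom))
        (φ.symm q.out)) = Quotient.mk _ ((e q).out) := by
      have : e q = Quotient.mk _ (φ.symm q.out) := by
        conv_lhs => rw [← q.out_eq]
        rfl
      rw [← this, Quotient.out_eq]
    rw [step1, myRelTr_term_eq hac step2.symm]
  rw [finsum_congr key]
  exact finsum_comp (g := fun q' => ((σ q'.out)⁻¹ : Aˣ) * (a * c) *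
    (σ ((φ.trans ψ) q'.out) : A)) ⇑e e.bijective

theorem myBrDen_mul_right {𝔭 : Ideal 𝒪} {φ ψ : P ≃* P} {a b : A}
    (ha : a ∈ intFixed 𝒪 σ φ ⊤) (hb : b ∈ brDen 𝒪 𝔭 σ ψ) :
    b * a ∈ brDen 𝒪 𝔭 σ (ψ.trans φ) := by
  have hle : brDen 𝒪 𝔭 σ ψ ≤
      (brDen 𝒪 𝔭 σ (ψ.trans φ)).comap (LinearMap.mulRight 𝒪 a) := by
    unfold brDen trSum
    apply sup_le
    · apply iSup_le; intro Q
      rw [Submodule.span_le]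
      rintro _ ⟨c, hc, rfl⟩
      simp only [Set.mem_preimage, SetLike.mem_coe, Submodule.mem_comap,
        LinearMap.mulRight_apply]
      rw [myRelTr_mul c ha]
      exact Submodule.mem_sup_left (Submodule.mem_iSup_of_mem Q
        (Submodule.subset_span ⟨c * a, intFixed_mul_mem 𝒪 hc ha, rfl⟩))
    · refine Submodule.smul_le.2 fun r hr n hn => ?_
      simp only [Submodule.mem_comap, LinearMap.mulRight_apply, smul_mul_assoc]
      exact Submodule.mem_sup_right
        (Submodule.smul_mem_smul hr (intFixed_mul_mem 𝒪 hn ha))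
  exact hle hb

theorem myBrDen_mul_left {𝔭 : Ideal 𝒪} {φ ψ : P ≃* P} {a b : A}
    (ha : a ∈ intFixed 𝒪 σ φ ⊤) (hb : b ∈ brDen 𝒪 𝔭 σ ψ) :
    a * b ∈ brDen 𝒪 𝔭 σ (φ.trans ψ) := by
  have hle : brDen 𝒪 𝔭 σ ψ ≤
      (brDen 𝒪 𝔭 σ (φ.trans ψ)).comap (LinearMap.mulLeft 𝒪 a) := by
    unfold brDen trSum
    apply sup_le
    · apply iSup_le; intro Q
      rw [Submodule.span_le]
      rintro _ ⟨c, hc, rfl⟩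
      simp only [Set.mem_preimage, SetLike.mem_coe, Submodule.mem_comap,
        LinearMap.mulLeft_apply]
      rw [myMul_relTr ha hc]
      have hQ' : Subgroup.comap φ.toMonoidHom (Q : Subgroup P) < ⊤ := by
        rw [lt_top_iff_ne_top]
        intro h
        refine (lt_top_iff_ne_top.mp Q.2) ?_
        rw [eq_top_iff]; intro x _
        have hx : φ.symm x ∈ Subgroup.comap φ.toMonoidHom (Q : Subgroup P) := by
          rw [h]; exact Subgroup.mem_top _
        simpa using hx
      exact Submodule.mem_sup_left (Submodule.mem_iSup_of_mem
        ⟨Subgroup.comap φ.toMonoidHom (Q : Subgroup P), hQ'⟩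
        (Submodule.subset_span ⟨a * c, myMul_intFixed_mem ha hc, rfl⟩))
    · refine Submodule.smul_le.2 fun r hr n hn => ?_
      simp only [Submodule.mem_comap, LinearMap.mulLeft_apply, mul_smul_comm]
      exact Submodule.mem_sup_right
        (Submodule.smul_mem_smul hr (intFixed_mul_mem 𝒪 ha hn))
  exact hle hb

end Aux

section DS

variable (𝒪 : Type*) [CommRing 𝒪]
variable {A : Type*} [Ring A] [Algebra 𝒪 A]
variable {P : Type*} [Group P]
variable (σ : P →* Aˣ) (K : Subgroup (MulAut P))

/-- the graded components -/
noncomputable abbrev myM (φ : K) := ↥(intFixed 𝒪 σ (φ : MulAut P) ⊤)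

noncomputable def myGMul (φ ψ : K) :
    myM 𝒪 σ K φ →ₗ[𝒪] myM 𝒪 σ K ψ →ₗ[𝒪] ⨁ χ : K, myM 𝒪 σ K χ :=
  LinearMap.mk₂ 𝒪
    (fun a b => DirectSum.lof 𝒪 K (myM 𝒪 σ K) (ψ * φ)
      ⟨(a : A) * (b : A), intFixed_mul_mem 𝒪 a.2 b.2⟩)
    (fun a a' b => by
      rw [← map_add]; exact congrArg _ (Subtype.ext (add_mul (a : A) (a' : A) (b : A))))
    (fun c a b => by
      rw [← map_smul]
      exact congrArg _ (Subtype.ext (by simp [smul_mul_assoc])))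
    (fun a b b' => by
      rw [← map_add]; exact congrArg _ (Subtype.ext (mul_add (a : A) (b : A) (b' : A))))
    (fun c a b => by
      rw [← map_smul]
      exact congrArg _ (Subtype.ext (by simp [mul_smul_comm])))

noncomputable def myBigMul :
    (⨁ φ : K, myM 𝒪 σ K φ) →ₗ[𝒪] (⨁ φ : K, myM 𝒪 σ K φ) →ₗ[𝒪] ⨁ φ : K, myM 𝒪 σ K φ :=
  DirectSum.toModule 𝒪 K _ (fun φ =>
    (DirectSum.toModule 𝒪 K (myM 𝒪 σ K φ →ₗ[𝒪] ⨁ χ : K, myM 𝒪 σ K χ)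
      (fun ψ => (myGMul 𝒪 σ K φ ψ).flip)).flip)

theorem myBigMul_of_of (φ ψ : K) (a : myM 𝒪 σ K φ) (b : myM 𝒪 σ K ψ) :
    myBigMul 𝒪 σ K (DirectSum.of _ φ a) (DirectSum.of _ ψ b) =
      DirectSum.of _ (ψ * φ) (⟨(a : A) * (b : A), intFixed_mul_mem 𝒪 a.2 b.2⟩ :
        myM 𝒪 σ K (ψ * φ)) := by
  rw [← DirectSum.lof_eq_of 𝒪, ← DirectSum.lof_eq_of 𝒪, ← DirectSum.lof_eq_of 𝒪, myBigMul,
    DirectSum.toModule_lof]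
  show (DirectSum.toModule 𝒪 K _ (fun ψ => (myGMul 𝒪 σ K φ ψ).flip))
      (DirectSum.lof 𝒪 K (myM 𝒪 σ K) ψ b) a = _
  rw [DirectSum.toModule_lof]
  rfl

theorem myOf_congr {i j : K} (h : i = j) {x : myM 𝒪 σ K i} {y : myM 𝒪 σ K j}
    (hxy : (x : A) = (y : A)) :
    DirectSum.of (myM 𝒪 σ K) i x = DirectSum.of (myM 𝒪 σ K) j y := by
  subst h; congr 1; exact Subtype.ext hxy

variable [Finite P] (𝔭 : Ideal 𝒪)

noncomputable abbrev myN (φ : K) : Submodule 𝒪 (myM 𝒪 σ K φ) :=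
  (brDen 𝒪 𝔭 σ (φ : MulAut P)).comap (intFixed 𝒪 σ (φ : MulAut P) ⊤).subtype

noncomputable def myBrPi :
    (⨁ φ : K, myM 𝒪 σ K φ) →ₗ[𝒪] ⨁ φ : K, BrQuot 𝒪 𝔭 σ (φ : MulAut P) :=
  DirectSum.toModule 𝒪 K _
    (fun φ : K => (DirectSum.lof 𝒪 K
        (fun φ : K => BrQuot 𝒪 𝔭 σ (φ : MulAut P)) φ).comp
      ((brDen 𝒪 𝔭 σ (φ : MulAut P)).comap
        (intFixed 𝒪 σ (φ : MulAut P) ⊤).subtype).mkQ)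

theorem myBrPi_of (φ : K) (a : myM 𝒪 σ K φ) :
    myBrPi 𝒪 σ K 𝔭 (DirectSum.of _ φ a) =
      DirectSum.of (fun φ : K => BrQuot 𝒪 𝔭 σ (φ : MulAut P)) φ
        (Submodule.Quotient.mk a) := by
  rw [← DirectSum.lof_eq_of 𝒪, myBrPi, DirectSum.toModule_lof]
  rfl

theorem myBrPi_surjective : Function.Surjective (myBrPi 𝒪 σ K 𝔭) := by
  intro x
  induction x using DirectSum.induction_on with
  | zero => exact ⟨0, map_zero _⟩
  | of φ a =>
      obtain ⟨b, rfl⟩ := Submodule.Quotient.mk_surjective _ a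
      exact ⟨DirectSum.of _ φ b, myBrPi_of 𝒪 σ K 𝔭 φ b⟩
  | add x y hx hy =>
      obtain ⟨x', rfl⟩ := hx; obtain ⟨y', rfl⟩ := hy
      exact ⟨x' + y', map_add _ _ _⟩

theorem myMem_N {φ ψ : K} (a : myM 𝒪 σ K φ) (b : myM 𝒪 σ K ψ)
    (h : (a : A) * (b : A) ∈ brDen 𝒪 𝔭 σ ((ψ * φ : K) : MulAut P)) :
    (⟨(a : A) * (b : A), intFixed_mul_mem 𝒪 a.2 b.2⟩ : myM 𝒪 σ K (ψ * φ)) ∈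
      myN 𝒪 σ K 𝔭 (ψ * φ) :=
  h

noncomputable def myGMulQ (φ ψ : K) :
    BrQuot 𝒪 𝔭 σ (φ : MulAut P) →ₗ[𝒪] BrQuot 𝒪 𝔭 σ (ψ : MulAut P) →ₗ[𝒪]
      ⨁ χ : K, BrQuot 𝒪 𝔭 σ (χ : MulAut P) := by
  letI : AddCommGroup (⨁ χ : K, BrQuot 𝒪 𝔭 σ (χ : MulAut P)) :=
    @DirectSum.instAddCommGroup K (fun χ => BrQuot 𝒪 𝔭 σ (χ : MulAut P))
      (fun _ => Submodule.Quotient.addCommGroup _)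
  refine ((myN 𝒪 σ K 𝔭 ψ).liftQ
    ((myN 𝒪 σ K 𝔭 φ).liftQ
      ((myGMul 𝒪 σ K φ ψ).compr₂ (myBrPi 𝒪 σ K 𝔭)) ?_).flip ?_).flip
  · -- N φ ≤ ker
    intro a ha
    rw [LinearMap.mem_ker]
    refine LinearMap.ext fun b => ?_
    show myBrPi 𝒪 σ K 𝔭 (myGMul 𝒪 σ K φ ψ a b) = 0
    rw [myGMul, LinearMap.mk₂_apply, DirectSum.lof_eq_of 𝒪, myBrPi_of]
    have hm : Submodule.Quotient.mk (p := myN 𝒪 σ K 𝔭 (ψ * φ))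
        (⟨(a : A) * (b : A), intFixed_mul_mem 𝒪 a.2 b.2⟩ : myM 𝒪 σ K (ψ * φ)) = 0 :=
      (Submodule.Quotient.mk_eq_zero _).2
        (myMem_N 𝒪 σ K 𝔭 a b (myBrDen_mul_right b.2 ha))
    rw [hm, map_zero]
  · intro b hb
    rw [LinearMap.mem_ker]
    apply LinearMap.ext
    intro abar
    obtain ⟨a, rfl⟩ := Submodule.Quotient.mk_surjective _ abar
    rw [LinearMap.flip_apply, Submodule.liftQ_apply, LinearMap.compr₂_apply,
      LinearMap.zero_apply]
    show myBrPi 𝒪 σ K 𝔭 (myGMul 𝒪 σ K φ ψ a b) = 0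
    rw [myGMul, LinearMap.mk₂_apply, DirectSum.lof_eq_of 𝒪, myBrPi_of]
    have hm : Submodule.Quotient.mk (p := myN 𝒪 σ K 𝔭 (ψ * φ))
        (⟨(a : A) * (b : A), intFixed_mul_mem 𝒪 a.2 b.2⟩ : myM 𝒪 σ K (ψ * φ)) = 0 :=
      (Submodule.Quotient.mk_eq_zero _).2
        (myMem_N 𝒪 σ K 𝔭 a b (myBrDen_mul_left a.2 hb))
    rw [hm, map_zero]

theorem myGMulQ_mk (φ ψ : K) (a : myM 𝒪 σ K φ) (b : myM 𝒪 σ K ψ) :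
    myGMulQ 𝒪 σ K 𝔭 φ ψ (Submodule.Quotient.mk a) (Submodule.Quotient.mk b) =
      DirectSum.of (fun χ : K => BrQuot 𝒪 𝔭 σ (χ : MulAut P)) (ψ * φ)
        (Submodule.Quotient.mk ⟨(a : A) * (b : A), intFixed_mul_mem 𝒪 a.2 b.2⟩) := by
  simp only [myGMulQ, LinearMap.flip_apply, Submodule.liftQ_apply, LinearMap.compr₂_apply]
  show myBrPi 𝒪 σ K 𝔭 (myGMul 𝒪 σ K φ ψ a b) = _
  rw [myGMul, LinearMap.mk₂_apply, DirectSum.lof_eq_of 𝒪, myBrPi_of]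

noncomputable def myBigMulQ :
    (⨁ φ : K, BrQuot 𝒪 𝔭 σ (φ : MulAut P)) →ₗ[𝒪]
      (⨁ φ : K, BrQuot 𝒪 𝔭 σ (φ : MulAut P)) →ₗ[𝒪]
        ⨁ φ : K, BrQuot 𝒪 𝔭 σ (φ : MulAut P) :=
  DirectSum.toModule 𝒪 K _ (fun φ =>
    (DirectSum.toModule 𝒪 K
        (BrQuot 𝒪 𝔭 σ (φ : MulAut P) →ₗ[𝒪] ⨁ χ : K, BrQuot 𝒪 𝔭 σ (χ : MulAut P))
      (fun ψ => (myGMulQ 𝒪 σ K 𝔭 φ ψ).flip)).flip)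

theorem myBigMulQ_of_of (φ ψ : K) (a : BrQuot 𝒪 𝔭 σ (φ : MulAut P))
    (b : BrQuot 𝒪 𝔭 σ (ψ : MulAut P)) :
    myBigMulQ 𝒪 σ K 𝔭 (DirectSum.of _ φ a) (DirectSum.of _ ψ b) =
      myGMulQ 𝒪 σ K 𝔭 φ ψ a b := by
  rw [← DirectSum.lof_eq_of 𝒪, ← DirectSum.lof_eq_of 𝒪, myBigMulQ, DirectSum.toModule_lof]
  show (DirectSum.toModule 𝒪 K _ (fun ψ => (myGMulQ 𝒪 σ K 𝔭 φ ψ).flip))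
      (DirectSum.lof 𝒪 K _ ψ b) a = _
  rw [DirectSum.toModule_lof]
  rfl

theorem myCompat (x y : ⨁ φ : K, myM 𝒪 σ K φ) :
    myBrPi 𝒪 σ K 𝔭 (myBigMul 𝒪 σ K x y) =
      myBigMulQ 𝒪 σ K 𝔭 (myBrPi 𝒪 σ K 𝔭 x) (myBrPi 𝒪 σ K 𝔭 y) := by
  induction x using DirectSum.induction_on with
  | zero => simp [map_zero, LinearMap.zero_apply]
  | add x1 x2 h1 h2 => simp [map_add, LinearMap.add_apply, h1, h2]
  | of φ a =>
    induction y using DirectSum.induction_on with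
    | zero => simp [map_zero, LinearMap.zero_apply]
    | add y1 y2 h1 h2 => simp [map_add, LinearMap.add_apply, h1, h2]
    | of ψ b =>
      rw [myBigMul_of_of, myBrPi_of, myBrPi_of, myBrPi_of, myBigMulQ_of_of, myGMulQ_mk]

theorem myBrPi_smul_zero {c : 𝒪} (hc : c ∈ 𝔭) (x : ⨁ φ : K, myM 𝒪 σ K φ) :
    myBrPi 𝒪 σ K 𝔭 (c • x) = 0 := by
  induction x using DirectSum.induction_on with
  | zero => rw [smul_zero, map_zero]
  | add x1 x2 h1 h2 => rw [smul_add, map_add, h1, h2, add_zero]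
  | of φ a =>
    rw [← DirectSum.lof_eq_of 𝒪, ← map_smul, DirectSum.lof_eq_of 𝒪, myBrPi_of]
    have hm : Submodule.Quotient.mk (p := myN 𝒪 σ K 𝔭 φ) (c • a) = 0 :=
      (Submodule.Quotient.mk_eq_zero _).2
        (Submodule.mem_sup_right (Submodule.smul_mem_smul hc a.2))
    rw [hm, map_zero]

theorem myIdealR (x : ⨁ φ : K, myM 𝒪 σ K φ) (ψ : K) (b : myM 𝒪 σ K ψ)
    (hb : b ∈ myN 𝒪 σ K 𝔭 ψ) :
    myBigMul 𝒪 σ K x (DirectSum.of _ ψ b) ∈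
      ⨆ φ : K, Submodule.map (DirectSum.lof 𝒪 K (myM 𝒪 σ K) φ) (myN 𝒪 σ K 𝔭 φ) := by
  induction x using DirectSum.induction_on with
  | zero => rw [map_zero, LinearMap.zero_apply]; exact zero_mem _
  | add x1 x2 h1 h2 =>
    rw [map_add, LinearMap.add_apply]; exact add_mem h1 h2
  | of φ a =>
    rw [myBigMul_of_of, ← DirectSum.lof_eq_of 𝒪]
    exact Submodule.mem_iSup_of_mem (ψ * φ) (Submodule.mem_map_of_mem
      (myMem_N 𝒪 σ K 𝔭 a b (myBrDen_mul_left a.2 hb)))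

theorem myIdealL (x : ⨁ φ : K, myM 𝒪 σ K φ) (ψ : K) (b : myM 𝒪 σ K ψ)
    (hb : b ∈ myN 𝒪 σ K 𝔭 ψ) :
    myBigMul 𝒪 σ K (DirectSum.of _ ψ b) x ∈
      ⨆ φ : K, Submodule.map (DirectSum.lof 𝒪 K (myM 𝒪 σ K) φ) (myN 𝒪 σ K 𝔭 φ) := by
  induction x using DirectSum.induction_on with
  | zero => rw [map_zero]; exact zero_mem _
  | add x1 x2 h1 h2 =>
    rw [map_add]; exact add_mem h1 h2
  | of φ a =>
    rw [myBigMul_of_of, ← DirectSum.lof_eq_of 𝒪]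
    exact Submodule.mem_iSup_of_mem (φ * ψ) (Submodule.mem_map_of_mem
      (myMem_N 𝒪 σ K 𝔭 b a (myBrDen_mul_right a.2 hb)))

theorem myBigMul_assoc (x y z : ⨁ φ : K, myM 𝒪 σ K φ) :
    myBigMul 𝒪 σ K (myBigMul 𝒪 σ K x y) z = myBigMul 𝒪 σ K x (myBigMul 𝒪 σ K y z) := by
  induction z using DirectSum.induction_on with
  | zero => simp [map_zero]
  | add z1 z2 h1 h2 => simp [map_add, h1, h2]
  | of χ c =>
    induction y using DirectSum.induction_on with
    | zero => simp [map_zero, LinearMap.zero_apply]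
    | add y1 y2 h1 h2 => simp [map_add, LinearMap.add_apply, h1, h2]
    | of ψ b =>
      induction x using DirectSum.induction_on with
      | zero => simp [map_zero, LinearMap.zero_apply]
      | add x1 x2 h1 h2 => simp [map_add, LinearMap.add_apply, h1, h2]
      | of φ a =>
        rw [myBigMul_of_of, myBigMul_of_of, myBigMul_of_of, myBigMul_of_of]
        exact myOf_congr 𝒪 σ K (mul_assoc χ ψ φ).symm (mul_assoc (a : A) (b : A) (c : A))

theorem myBigMul_one_left (x : ⨁ φ : K, myM 𝒪 σ K φ) :
    myBigMul 𝒪 σ K (DirectSum.of _ (1 : K) ⟨(1 : A), intFixed_one_mem 𝒪 σ⟩) x = x := by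
  induction x using DirectSum.induction_on with
  | zero => simp [map_zero]
  | add x1 x2 h1 h2 => simp only [map_add, h1, h2]
  | of ψ b =>
    rw [myBigMul_of_of]
    exact myOf_congr 𝒪 σ K (mul_one ψ) (one_mul (b : A))

theorem myBigMul_one_right (x : ⨁ φ : K, myM 𝒪 σ K φ) :
    myBigMul 𝒪 σ K x (DirectSum.of _ (1 : K) ⟨(1 : A), intFixed_one_mem 𝒪 σ⟩) = x := by
  induction x using DirectSum.induction_on with
  | zero => simp [map_zero, LinearMap.zero_apply]
  | add x1 x2 h1 h2 => simp only [map_add, LinearMap.add_apply, h1, h2]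
  | of ψ b =>
    rw [myBigMul_of_of]
    exact myOf_congr 𝒪 σ K (one_mul ψ) (mul_one (b : A))

end DS


/-- Let `A` be a `P`-interior `𝒪`-algebra and `K ≤ Aut P`.  The external
direct sum `⊕_{φ∈K} A^{Δ_φ(P)}` carries an associative unital `𝒪`-algebra structure induced
by the multiplication of `A` (the product of the `φ`-component and the `ψ`-component lying in
the `ψ∘φ`-component, with unit `1` in the `id`-component);
`⊕_{φ∈K} (Σ_{Q<P} A^{Δ_φ(P)}_{Δ_φ(Q)} + 𝔭·A^{Δ_φ(P)})` is a two-sided ideal of it; and the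
quotient — the extended Brauer quotient `N̄_A^K(P) = ⊕_{φ∈K} A(Δ_φ(P))` — is a `K`-graded
`k`-algebra (`𝔭` acts as zero) such that the direct sum `Br_P^K` of the maps `Br_{Δ_φ(P)}`
is a homomorphism of `K`-graded algebras. -/
theorem stmt2
    (𝒪 : Type*) [CommRing 𝒪] [IsDomain 𝒪] [IsDiscreteValuationRing 𝒪]
    [IsAdicComplete (IsLocalRing.maximalIdeal 𝒪) 𝒪]
    (p : ℕ) [Fact p.Prime] [CharP (IsLocalRing.ResidueField 𝒪) p]
    (P : Type*) [Group P] [Finite P] (hP : IsPGroup p P)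
    (A : Type*) [Ring A] [Algebra 𝒪 A] (σ : P →* Aˣ)
    (K : Subgroup (MulAut P)) :
    ∃ (mul : (⨁ φ : K, ↥(intFixed 𝒪 σ (φ : MulAut P) ⊤)) →ₗ[𝒪]
             (⨁ φ : K, ↥(intFixed 𝒪 σ (φ : MulAut P) ⊤)) →ₗ[𝒪]
             (⨁ φ : K, ↥(intFixed 𝒪 σ (φ : MulAut P) ⊤)))
      (one : ⨁ φ : K, ↥(intFixed 𝒪 σ (φ : MulAut P) ⊤)),
      -- the multiplication is the one induced by that of `A`:
      (∀ (φ ψ : K) (a b : A) (ha : a ∈ intFixed 𝒪 σ (φ : MulAut P) ⊤)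
          (hb : b ∈ intFixed 𝒪 σ (ψ : MulAut P) ⊤),
        mul (DirectSum.of _ φ ⟨a, ha⟩) (DirectSum.of _ ψ ⟨b, hb⟩) =
          DirectSum.of _ (ψ * φ) ⟨a * b, intFixed_mul_mem 𝒪 ha hb⟩) ∧
      one = DirectSum.of _ (1 : K) ⟨(1 : A), intFixed_one_mem 𝒪 σ⟩ ∧
      -- associativity and unitality:
      (∀ x y z, mul (mul x y) z = mul x (mul y z)) ∧
      (∀ x, mul one x = x ∧ mul x one = x) ∧
      -- `⊕_{φ∈K} (Σ_{Q<P} A^{Δ_φ(P)}_{Δ_φ(Q)} + 𝔭·A^{Δ_φ(P)})` is a two-sided ideal: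
      (∀ x y, y ∈ (⨆ φ : K, Submodule.map (DirectSum.lof 𝒪 K
              (fun φ : K => ↥(intFixed 𝒪 σ (φ : MulAut P) ⊤)) φ)
              ((brDen 𝒪 (IsLocalRing.maximalIdeal 𝒪) σ (φ : MulAut P)).comap
                (intFixed 𝒪 σ (φ : MulAut P) ⊤).subtype)) →
        mul x y ∈ (⨆ φ : K, Submodule.map (DirectSum.lof 𝒪 K
              (fun φ : K => ↥(intFixed 𝒪 σ (φ : MulAut P) ⊤)) φ)
              ((brDen 𝒪 (IsLocalRing.maximalIdeal 𝒪) σ (φ : MulAut P)).comap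
                (intFixed 𝒪 σ (φ : MulAut P) ⊤).subtype)) ∧
        mul y x ∈ (⨆ φ : K, Submodule.map (DirectSum.lof 𝒪 K
              (fun φ : K => ↥(intFixed 𝒪 σ (φ : MulAut P) ⊤)) φ)
              ((brDen 𝒪 (IsLocalRing.maximalIdeal 𝒪) σ (φ : MulAut P)).comap
                (intFixed 𝒪 σ (φ : MulAut P) ⊤).subtype))) ∧
      -- consequently the quotient `N̄_A^K(P) = ⊕_{φ∈K} A(Δ_φ(P))` is a `K`-graded
      -- `k`-algebra, and the direct sum of the Brauer homomorphisms is a homomorphism of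
      -- `K`-graded algebras:
      ∃ (mulN : (⨁ φ : K, BrQuot 𝒪 (IsLocalRing.maximalIdeal 𝒪) σ (φ : MulAut P)) →ₗ[𝒪]
                (⨁ φ : K, BrQuot 𝒪 (IsLocalRing.maximalIdeal 𝒪) σ (φ : MulAut P)) →ₗ[𝒪]
                (⨁ φ : K, BrQuot 𝒪 (IsLocalRing.maximalIdeal 𝒪) σ (φ : MulAut P)))
        (oneN : ⨁ φ : K, BrQuot 𝒪 (IsLocalRing.maximalIdeal 𝒪) σ (φ : MulAut P)),
        (∀ x y z, mulN (mulN x y) z = mulN x (mulN y z)) ∧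
        (∀ x, mulN oneN x = x ∧ mulN x oneN = x) ∧
        -- `𝔭` acts as zero, i.e. the quotient is a `k = 𝒪/𝔭`-algebra:
        (∀ c ∈ IsLocalRing.maximalIdeal 𝒪,
          ∀ x : ⨁ φ : K, BrQuot 𝒪 (IsLocalRing.maximalIdeal 𝒪) σ (φ : MulAut P), c • x = 0) ∧
        -- the graded multiplication on the quotient is induced by that of `A`:
        (∀ (φ ψ : K) (a b : A) (ha : a ∈ intFixed 𝒪 σ (φ : MulAut P) ⊤)
            (hb : b ∈ intFixed 𝒪 σ (ψ : MulAut P) ⊤),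
          mulN (DirectSum.of _ φ (Submodule.Quotient.mk ⟨a, ha⟩))
               (DirectSum.of _ ψ (Submodule.Quotient.mk ⟨b, hb⟩)) =
            DirectSum.of _ (ψ * φ)
              (Submodule.Quotient.mk ⟨a * b, intFixed_mul_mem 𝒪 ha hb⟩)) ∧
        -- the componentwise Brauer map is a homomorphism of `K`-graded algebras:
        (∀ x y, (DirectSum.toModule 𝒪 K _
              (fun φ : K => (DirectSum.lof 𝒪 K
                  (fun φ : K => BrQuot 𝒪 (IsLocalRing.maximalIdeal 𝒪) σ (φ : MulAut P)) φ).comp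
                ((brDen 𝒪 (IsLocalRing.maximalIdeal 𝒪) σ (φ : MulAut P)).comap
                  (intFixed 𝒪 σ (φ : MulAut P) ⊤).subtype).mkQ)) (mul x y) =
            mulN ((DirectSum.toModule 𝒪 K _
              (fun φ : K => (DirectSum.lof 𝒪 K
                  (fun φ : K => BrQuot 𝒪 (IsLocalRing.maximalIdeal 𝒪) σ (φ : MulAut P)) φ).comp
                ((brDen 𝒪 (IsLocalRing.maximalIdeal 𝒪) σ (φ : MulAut P)).comap
                  (intFixed 𝒪 σ (φ : MulAut P) ⊤).subtype).mkQ)) x)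
                 ((DirectSum.toModule 𝒪 K _
              (fun φ : K => (DirectSum.lof 𝒪 K
                  (fun φ : K => BrQuot 𝒪 (IsLocalRing.maximalIdeal 𝒪) σ (φ : MulAut P)) φ).comp
                ((brDen 𝒪 (IsLocalRing.maximalIdeal 𝒪) σ (φ : MulAut P)).comap
                  (intFixed 𝒪 σ (φ : MulAut P) ⊤).subtype).mkQ)) y)) := by
  
  classical
  set 𝔭 := IsLocalRing.maximalIdeal 𝒪 with h𝔭
  refine ⟨myBigMul 𝒪 σ K, DirectSum.of _ (1 : K) ⟨(1 : A), intFixed_one_mem 𝒪 σ⟩,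
    ?_, rfl, myBigMul_assoc 𝒪 σ K,
    fun x => ⟨myBigMul_one_left 𝒪 σ K x, myBigMul_one_right 𝒪 σ K x⟩, ?_, ?_⟩
  · intro φ ψ a b ha hb
    exact myBigMul_of_of 𝒪 σ K φ ψ ⟨a, ha⟩ ⟨b, hb⟩
  · intro x y hy
    refine Submodule.iSup_induction' _ (motive := fun y _ =>
        myBigMul 𝒪 σ K x y ∈ (⨆ φ : K, Submodule.map (DirectSum.lof 𝒪 K
          (fun φ : K => ↥(intFixed 𝒪 σ (φ : MulAut P) ⊤)) φ)
          ((brDen 𝒪 𝔭 σ (φ : MulAut P)).comap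
            (intFixed 𝒪 σ (φ : MulAut P) ⊤).subtype)) ∧
        myBigMul 𝒪 σ K y x ∈ (⨆ φ : K, Submodule.map (DirectSum.lof 𝒪 K
          (fun φ : K => ↥(intFixed 𝒪 σ (φ : MulAut P) ⊤)) φ)
          ((brDen 𝒪 𝔭 σ (φ : MulAut P)).comap
            (intFixed 𝒪 σ (φ : MulAut P) ⊤).subtype)))
      ?_ ?_ ?_ hy
    · rintro ψ y' ⟨b, hb, rfl⟩
      rw [DirectSum.lof_eq_of 𝒪]
      exact ⟨myIdealR 𝒪 σ K 𝔭 x ψ b hb, myIdealL 𝒪 σ K 𝔭 x ψ b hb⟩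
    · constructor <;> simp only [map_zero, LinearMap.zero_apply] <;> exact zero_mem _
    · rintro y1 y2 hy1 hy2 ⟨h1l, h1r⟩ ⟨h2l, h2r⟩
      constructor
      · rw [map_add]; exact add_mem h1l h2l
      · rw [map_add, LinearMap.add_apply]; exact add_mem h1r h2r
  · refine ⟨myBigMulQ 𝒪 σ K 𝔭,
      myBrPi 𝒪 σ K 𝔭 (DirectSum.of _ (1 : K) ⟨(1 : A), intFixed_one_mem 𝒪 σ⟩),
      ?_, ?_, ?_, ?_, ?_⟩
    · intro x y z
      obtain ⟨x', rfl⟩ := myBrPi_surjective 𝒪 σ K 𝔭 x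
      obtain ⟨y', rfl⟩ := myBrPi_surjective 𝒪 σ K 𝔭 y
      obtain ⟨z', rfl⟩ := myBrPi_surjective 𝒪 σ K 𝔭 z
      rw [← myCompat, ← myCompat, ← myCompat, ← myCompat, myBigMul_assoc]
    · intro x
      obtain ⟨x', rfl⟩ := myBrPi_surjective 𝒪 σ K 𝔭 x
      constructor
      · rw [← myCompat, myBigMul_one_left]
      · rw [← myCompat, myBigMul_one_right]
    · intro c hc x
      obtain ⟨x', rfl⟩ := myBrPi_surjective 𝒪 σ K 𝔭 x
      rw [← map_smul]
      exact myBrPi_smul_zero 𝒪 σ K 𝔭 hc x'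
    · intro φ ψ a b ha hb
      rw [myBigMulQ_of_of]
      exact myGMulQ_mk 𝒪 σ K 𝔭 φ ψ ⟨a, ha⟩ ⟨b, hb⟩
    · intro x y
      exact myCompat 𝒪 σ K 𝔭 x y
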